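/- Let A be an algebra over a field K of characteristic zero, δ a locally nilpotent K-derivation of A with δ(x) = 1 for some x ∈ A, and φ := Σ_{i≥0} (-1)^i (x^i/i!) δ^i. Then φ(x^i) = 0 for all i ≥ 1, and A decomposes as a direct sum of right A^δ-modules A = A^δ ⊕ xA, with φ(a + xb) = a for a ∈ A^δ, b ∈ A. -/

import Mathlib

set_option linter.unusedSectionVars false
section Aux
variable {K A : Type*} [Field K] [CharZero K] [Ring A] [Algebra K A]
  (δ : A →ₗ[K] A) (hleib : ∀ a b : A, δ (a * b) = δ a * b + a * δ b)
  (x : A) (hx : δ x = 1)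

lemma aux_hfac (i : ℕ) :
    (((i : K)) + 1) * ((-1 : K)^(i+1) * (((i+1).factorial : K))⁻¹)
      = -((-1 : K)^i * ((i.factorial : K))⁻¹) := by
  have h1 : ((i.factorial : K)) ≠ 0 := Nat.cast_ne_zero.mpr i.factorial_ne_zero
  have h2 : ((i : K) + 1) ≠ 0 := Nat.cast_add_one_ne_zero i
  rw [Nat.factorial_succ, Nat.cast_mul, Nat.cast_add, Nat.cast_one, mul_inv]
  field_simp
  ring

include hleib in
lemma aux_d1 : δ 1 = 0 := by
  have h := hleib 1 1
  simp only [one_mul, mul_one] at h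
  exact (left_eq_add.mp h)

include hleib hx in
lemma aux_dpow (i : ℕ) : δ (x ^ i) = i • x ^ (i - 1) := by
  induction i with
  | zero => simpa using aux_d1 δ hleib
  | succ m ih =>
    rw [pow_succ, hleib, ih, hx, mul_one, smul_mul_assoc, Nat.add_sub_cancel]
    cases m with
    | zero => simp
    | succ k =>
      rw [Nat.succ_sub_one, ← pow_succ]
      simp only [add_nsmul, one_nsmul]

include hleib hx in
lemma aux_dxb (b : A) (i : ℕ) :
    (δ ^ i) (x * b) = x * (δ ^ i) b + i • (δ ^ (i - 1)) b := by
  induction i with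
  | zero => simp
  | succ m ih =>
    have hL : (δ ^ (m+1)) (x * b) = δ ((δ ^ m) (x * b)) := by
      rw [pow_succ', Module.End.mul_apply]
    have hδm : δ ((δ ^ m) b) = (δ ^ (m+1)) b := by
      rw [pow_succ', Module.End.mul_apply]
    rw [hL, ih, map_add, map_nsmul, hleib, hx, one_mul, Nat.add_sub_cancel, hδm]
    cases m with
    | zero => simp; abel
    | succ k =>
      have : δ ((δ ^ (k + 1 - 1)) b) = (δ ^ (k+1)) b := by
        rw [Nat.add_sub_cancel, pow_succ', Module.End.mul_apply]
      rw [this]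
      simp only [add_nsmul, one_nsmul]
      abel

end Aux

section Aux2
set_option linter.unusedSectionVars false
variable {K A : Type*} [Field K] [CharZero K] [Ring A] [Algebra K A]
  (δ : A →ₗ[K] A) (hleib : ∀ a b : A, δ (a * b) = δ a * b + a * δ b)
  (x : A) (hx : δ x = 1)

lemma aux_cancel (f g : ℕ → A) (N : ℕ) (hfN : f N = 0) (hg : ∀ i, g (i+1) = f i) :
    (∑ i ∈ Finset.range (N+1), ((-1 : K)^i * ((i.factorial : K))⁻¹) • f i)
      + ∑ i ∈ Finset.range (N+1), (((i : K)) * ((-1 : K)^i * ((i.factorial : K))⁻¹)) • g i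
      = 0 := by
  rw [Finset.sum_range_succ, hfN, smul_zero, add_zero, Finset.sum_range_succ']
  simp only [Nat.cast_zero, zero_mul, zero_smul, add_zero]
  have key : ∀ i : ℕ, ((((i+1 : ℕ)) : K) * ((-1 : K)^(i+1) * (((i+1).factorial : K))⁻¹)) • g (i+1)
      = -(((-1 : K)^i * ((i.factorial : K))⁻¹) • f i) := by
    intro i
    rw [hg, ← neg_smul]
    congr 1
    push_cast
    exact aux_hfac (K := K) i
  rw [Finset.sum_congr rfl fun i _ => key i, ← Finset.sum_add_distrib]
  simp

include hleib hx in
lemma aux_Sc (c : A) (hc : δ c = 0) (N : ℕ) :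
    ∑ i ∈ Finset.range (N+1), ((-1 : K)^i * ((i.factorial : K))⁻¹) • (x^i * (δ^i) c) = c := by
  rw [Finset.sum_range_succ']
  have h1 : ∀ i : ℕ, (δ^(i+1)) c = 0 := fun i => by
    rw [pow_succ, Module.End.mul_apply, hc, map_zero]
  simp [h1]

include hleib hx in
lemma aux_Sxb (b : A) (N : ℕ) (hb : (δ^N) b = 0) :
    ∑ i ∈ Finset.range (N+1), ((-1 : K)^i * ((i.factorial : K))⁻¹) • (x^i * (δ^i) (x * b))
      = 0 := by
  have step : ∀ i ∈ Finset.range (N+1),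
      ((-1 : K)^i * ((i.factorial : K))⁻¹) • (x^i * (δ^i) (x * b))
        = ((-1 : K)^i * ((i.factorial : K))⁻¹) • (x^(i+1) * (δ^i) b)
          + (((i : K)) * ((-1 : K)^i * ((i.factorial : K))⁻¹)) • (x^i * (δ^(i-1)) b) := by
    intro i _
    rw [aux_dxb δ hleib x hx, mul_add, smul_add, ← mul_assoc, ← pow_succ,
      mul_smul_comm, ← Nat.cast_smul_eq_nsmul K, smul_smul, mul_comm _ ((i : K))]
  rw [Finset.sum_congr rfl step, Finset.sum_add_distrib]
  exact aux_cancel (fun i => x^(i+1) * (δ^i) b) (fun i => x^i * (δ^(i-1)) b) N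
    (by simp [hb]) (fun i => by simp)

include hleib hx in
lemma aux_dS (a : A) (N : ℕ) (ha : (δ^N) a = 0) :
    δ (∑ i ∈ Finset.range (N+1), ((-1 : K)^i * ((i.factorial : K))⁻¹) • (x^i * (δ^i) a))
      = 0 := by
  rw [map_sum]
  have step : ∀ i ∈ Finset.range (N+1),
      δ (((-1 : K)^i * ((i.factorial : K))⁻¹) • (x^i * (δ^i) a))
        = ((-1 : K)^i * ((i.factorial : K))⁻¹) • (x^i * (δ^(i+1)) a)
          + (((i : K)) * ((-1 : K)^i * ((i.factorial : K))⁻¹)) • (x^(i-1) * (δ^i) a) := by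
    intro i _
    have hd : δ ((δ^i) a) = (δ^(i+1)) a := by rw [pow_succ', Module.End.mul_apply]
    rw [map_smul, hleib, aux_dpow δ hleib x hx, hd, smul_mul_assoc,
      ← Nat.cast_smul_eq_nsmul K, smul_add, smul_smul, mul_comm _ ((i : K)), add_comm]
  rw [Finset.sum_congr rfl step, Finset.sum_add_distrib]
  have hN1 : (δ^(N+1)) a = 0 := by rw [pow_succ', Module.End.mul_apply, ha, map_zero]
  exact aux_cancel (fun i => x^i * (δ^(i+1)) a) (fun i => x^(i-1) * (δ^i) a) N
    (by simp [hN1]) (fun i => by simp)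

end Aux2


/-- `φ (x^i) = 0` for `i ≥ 1`, and `A = A^δ ⊕ xA` (direct sum), with
`φ (a + x b) = a` for `a ∈ A^δ`, `b ∈ A`. -/
theorem stmt4 {K A : Type*} [Field K] [CharZero K] [Ring A] [Algebra K A]
    (δ : A →ₗ[K] A) (hleib : ∀ a b : A, δ (a * b) = δ a * b + a * δ b)
    (hln : ∀ a : A, ∃ n : ℕ, (δ ^ n) a = 0)
    (x : A) (hx : δ x = 1)
    (φ : A → A)
    (hφ : ∀ (a : A) (N : ℕ), (δ ^ N) a = 0 →
      φ a = ∑ i ∈ Finset.range N,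
        ((-1 : K) ^ i * ((Nat.factorial i : K)⁻¹)) • (x ^ i * (δ ^ i) a)) :
    (∀ i : ℕ, 1 ≤ i → φ (x ^ i) = 0) ∧
    (∀ a : A, ∃ c b : A, δ c = 0 ∧ a = c + x * b) ∧
    (∀ c b c' b' : A, δ c = 0 → δ c' = 0 → c + x * b = c' + x * b' → c = c') ∧
    (∀ c b : A, δ c = 0 → φ (c + x * b) = c) := by
  have hφ4 : ∀ c b : A, δ c = 0 → φ (c + x * b) = c := by
    intro c b hc
    obtain ⟨N, hN⟩ := hln b
    have hbN1 : (δ ^ (N+1)) b = 0 := by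
      rw [pow_succ', Module.End.mul_apply, hN, map_zero]
    have hxbN : (δ ^ (N+1)) (x * b) = 0 := by
      rw [aux_dxb δ hleib x hx, hbN1, mul_zero, Nat.add_sub_cancel, hN, zero_add, smul_zero]
    have hcN : (δ ^ (N+1)) c = 0 := by
      rw [pow_succ, Module.End.mul_apply, hc, map_zero]
    have hsum := hφ (c + x * b) (N+1) (by rw [map_add, hxbN, hcN, zero_add])
    have hsplit : ∀ i ∈ Finset.range (N+1),
        ((-1 : K) ^ i * ((Nat.factorial i : K)⁻¹)) • (x ^ i * (δ ^ i) (c + x * b))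
          = ((-1 : K) ^ i * ((Nat.factorial i : K)⁻¹)) • (x ^ i * (δ ^ i) c)
            + ((-1 : K) ^ i * ((Nat.factorial i : K)⁻¹)) • (x ^ i * (δ ^ i) (x * b)) := by
      intro i _
      rw [map_add, mul_add, smul_add]
    rw [hsum, Finset.sum_congr rfl hsplit, Finset.sum_add_distrib,
      aux_Sc δ hleib x hx c hc, aux_Sxb δ hleib x hx b N hN, add_zero]
  refine ⟨?_, ?_, ?_, hφ4⟩
  · intro i hi
    obtain ⟨j, rfl⟩ : ∃ j, i = j + 1 := ⟨i - 1, (Nat.succ_pred_eq_of_pos hi).symm⟩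
    have h := hφ4 0 (x ^ j) (map_zero δ)
    rw [zero_add] at h
    rw [pow_succ']
    exact h
  · intro a
    obtain ⟨N, hN⟩ := hln a
    have hN1 : (δ ^ (N+1)) a = 0 := by
      rw [pow_succ', Module.End.mul_apply, hN, map_zero]
    have hφa := hφ a (N+1) hN1
    refine ⟨φ a, ∑ i ∈ Finset.range N,
      (-((-1 : K) ^ (i+1) * (((i+1).factorial : K))⁻¹)) • (x ^ i * (δ ^ (i+1)) a), ?_, ?_⟩
    · rw [hφa]
      exact aux_dS δ hleib x hx a N hN
    · rw [hφa, Finset.mul_sum, Finset.sum_range_succ']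
      have hterm : ∀ i ∈ Finset.range N,
          x * ((-((-1 : K) ^ (i+1) * (((i+1).factorial : K))⁻¹)) • (x ^ i * (δ ^ (i+1)) a))
            = -(((-1 : K) ^ (i+1) * (((i+1).factorial : K))⁻¹) • (x ^ (i+1) * (δ ^ (i+1)) a)) := by
        intro i _
        rw [mul_smul_comm, ← mul_assoc, ← pow_succ', neg_smul]
      rw [Finset.sum_congr rfl hterm]
      simp only [pow_zero, Nat.factorial_zero, Nat.cast_one, inv_one, one_mul, mul_one, one_smul,
        Module.End.one_apply]
      rw [Finset.sum_neg_distrib]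
      abel
  · intro c b c' b' hc hc' heq
    have h1 := hφ4 c b hc
    have h2 := hφ4 c' b' hc'
    rw [← h1, heq, h2]
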